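/- Let X_i = (x_i, u_i) ∈ X × ℝ for i = 0,1 and suppose the c-chord connects its endpoints: F_{X₀X₁}(x_i) = u_i for i = 0,1. Then there exist y ∈ Y and h ∈ ℝ with -c(x_i, y) + h = u_i for both i = 0,1; i.e. some c-affine function passes through both X₀ and X₁. -/

import Mathlib

open Set Function

noncomputable section

/-- Points of `ℝⁿ`. -/
abbrev Ept (n : ℕ) := EuclideanSpace ℝ (Fin n)

/-- `-D_x c(x,y)`, the negative gradient of `c` in the first variable. -/
def nDx {n : ℕ} (c : Ept n → Ept n → ℝ) (x y : Ept n) : Ept n :=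
  -gradient (fun x' => c x' y) x

/-- `-D_y c(x,y)`, the negative gradient of `c` in the second variable. -/
def nDy {n : ℕ} (c : Ept n → Ept n → ℝ) (x y : Ept n) : Ept n :=
  -gradient (fun y' => c x y') y

/-- The mixed Hessian `D²_{xy} c (x,y)` as an `n × n` matrix. -/
def mixedHessian {n : ℕ} (c : Ept n → Ept n → ℝ) (x y : Ept n) :
    Matrix (Fin n) (Fin n) ℝ := fun i j =>
  fderiv ℝ (fun x' => fderiv ℝ (fun y' => c x' y') y (EuclideanSpace.single j 1)) x
    (EuclideanSpace.single i 1)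

/-- Frobenius norm of a matrix. -/
def frobNorm {n : ℕ} (M : Matrix (Fin n) (Fin n) ℝ) : ℝ :=
  Real.sqrt (∑ i, ∑ j, (M i j) ^ 2)

/-- Standing assumptions on the spaces `X`, `Y` and the cost `c`: compactness, nonempty
interiors, `C²` regularity, bi-twist, non-degeneracy, and `c`-convexity of `X` and `Y`
with respect to each other. -/
structure CostSetup {n : ℕ} (X Y : Set (Ept n)) (c : Ept n → Ept n → ℝ) : Prop where
  compactX : IsCompact X
  compactY : IsCompact Y
  intX : (interior X).Nonempty
  intY : (interior Y).Nonempty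
  smooth : ContDiff ℝ 2 (Function.uncurry c)
  twist : ∀ x ∈ X, Set.InjOn (fun y => nDx c x y) Y
  twistStar : ∀ y ∈ Y, Set.InjOn (fun x => nDy c x y) X
  nondeg : ∀ x ∈ X, ∀ y ∈ Y, IsUnit (mixedHessian c x y)
  cConvX : ∀ y ∈ Y, Convex ℝ ((fun x => nDy c x y) '' X)
  cConvY : ∀ x ∈ X, Convex ℝ ((fun y => nDx c x y) '' Y)

/-- Loeper's property. -/
def Loeper {n : ℕ} (X Y : Set (Ept n)) (c : Ept n → Ept n → ℝ) : Prop :=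
  ∀ x₀ ∈ X, ∀ x₁ ∈ X, ∀ y₀ ∈ Y, ∀ y ∈ Y, ∀ xt ∈ X, ∀ t ∈ Icc (0:ℝ) 1,
    nDy c xt y₀ = t • nDy c x₁ y₀ + (1 - t) • nDy c x₀ y₀ →
    -c xt y + c xt y₀ ≤ max (-c x₀ y + c x₀ y₀) (-c x₁ y + c x₁ y₀)

/-- The `c`-chord between `(x₀,u₀)` and `(x₁,u₁)`, evaluated at `x`. -/
def cChord {n : ℕ} (Y : Set (Ept n)) (c : Ept n → Ept n → ℝ)
    (x₀ x₁ : Ept n) (u₀ u₁ : ℝ) (x : Ept n) : ℝ :=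
  sSup {v : ℝ | ∃ y ∈ Y, ∃ h : ℝ, -c x₀ y + h ≤ u₀ ∧ -c x₁ y + h ≤ u₁ ∧ v = -c x y + h}

/-- Alternative `c`-convexity. -/
def AltCConvex {n : ℕ} (X Y : Set (Ept n)) (c : Ept n → Ept n → ℝ) (φ : Ept n → ℝ) : Prop :=
  ∀ x₀ ∈ X, ∀ x₁ ∈ X, ∀ x ∈ X, φ x ≤ cChord Y c x₀ x₁ (φ x₀) (φ x₁) x

/-- `c`-convexity: `φ` is a supremum of `c`-affine functions. -/
def CConvex {n : ℕ} (X Y : Set (Ept n)) (c : Ept n → Ept n → ℝ) (φ : Ept n → ℝ) : Prop :=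
  ∃ ψ : Ept n → EReal, (∃ y ∈ Y, ψ y ≠ ⊥) ∧ (∀ y, ψ y ≠ ⊤) ∧
    ∀ x ∈ X, (φ x : EReal) = ⨆ y ∈ Y, (((-c x y : ℝ) : EReal) + ψ y)

/-!
`Y` is connected, being mapped by the continuous injection `y ↦ -D_x c(x₀, y)` onto a convex
set. Every competitor `(y, h)` in the `c`-chord has `h ≤ u₁ + c(x₁, y)`, so its value at `x₀` is
at most `u₁ + max_Y (c(x₁, ·) - c(x₀, ·))`; symmetrically its value at `x₁` is at most
`u₀ - min_Y (c(x₁, ·) - c(x₀, ·))`. Hence the chord can only reach both endpoints if `u₀ - u₁`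
lies between that minimum and maximum, and the intermediate value theorem yields `y` with
`c(x₁, y) - c(x₀, y) = u₀ - u₁`; the `c`-affine function with `h = u₀ + c(x₀, y)` works.
-/

theorem continuous_nDx {n : ℕ} {c : Ept n → Ept n → ℝ}
    (hc : ContDiff ℝ 1 (uncurry c)) (x : Ept n) : Continuous (nDx c x) := by
  have hflip : ContDiff ℝ 1 (uncurry (flip c)) := hc.comp (contDiff_snd.prodMk contDiff_fst)
  have hfderiv : Continuous fun y => fderiv ℝ (fun x' => c x' y) x :=
    (hflip.fderiv (n := 0) contDiff_const le_rfl).continuous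
  exact ((InnerProductSpace.toDual ℝ (Ept n)).symm.continuous.comp hfderiv).neg

theorem IsCompact.isPreconnected_of_injOn_of_convex_image {α E : Type*} [TopologicalSpace α]
    [NormedAddCommGroup E] [NormedSpace ℝ E] {K : Set α} (hK : IsCompact K) {f : α → E}
    (hf : ContinuousOn f K) (hinj : InjOn f K) (hconv : Convex ℝ (f '' K)) :
    IsPreconnected K := by
  have : CompactSpace K := isCompact_iff_compactSpace.mp hK
  have hemb : Topology.IsClosedEmbedding (K.domRestrict f) :=
    hf.domRestrict.isClosedEmbedding hinj.injective
  have huniv : IsPreconnected (univ : Set K) := by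
    rw [← hemb.isInducing.isPreconnected_image, image_univ, range_domRestrict]
    exact hconv.isPreconnected
  simpa using Topology.IsInducing.subtypeVal.isPreconnected_image.mpr huniv

section cChord

variable {n : ℕ} {Y : Set (Ept n)} {c : Ept n → Ept n → ℝ} {x₀ x₁ : Ept n} {u₀ u₁ : ℝ}

theorem cChord_set_nonempty (hY : Y.Nonempty) (x : Ept n) :
    Set.Nonempty
      {v : ℝ | ∃ y ∈ Y, ∃ h : ℝ, -c x₀ y + h ≤ u₀ ∧ -c x₁ y + h ≤ u₁ ∧ v = -c x y + h} := by
  obtain ⟨y, hy⟩ := hY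
  exact ⟨_, y, hy, min (u₀ + c x₀ y) (u₁ + c x₁ y),
    by linarith [min_le_left (u₀ + c x₀ y) (u₁ + c x₁ y)],
    by linarith [min_le_right (u₀ + c x₀ y) (u₁ + c x₁ y)], rfl⟩

theorem cChord_left_le (hY : Y.Nonempty) {M : ℝ} (hM : ∀ y ∈ Y, c x₁ y - c x₀ y ≤ M) :
    cChord Y c x₀ x₁ u₀ u₁ x₀ ≤ u₁ + M := by
  refine csSup_le (cChord_set_nonempty hY x₀) ?_
  rintro _ ⟨y, hy, h, -, hle₁, rfl⟩
  linarith [hM y hy]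

theorem cChord_right_le (hY : Y.Nonempty) {m : ℝ} (hm : ∀ y ∈ Y, m ≤ c x₁ y - c x₀ y) :
    cChord Y c x₀ x₁ u₀ u₁ x₁ ≤ u₀ - m := by
  refine csSup_le (cChord_set_nonempty hY x₁) ?_
  rintro _ ⟨y, hy, h, hle₀, -, rfl⟩
  linarith [hm y hy]

theorem exists_cAffine_of_cChord_eq (hY : IsCompact Y) (hYne : Y.Nonempty)
    (hconn : IsPreconnected Y) (hc : ContinuousOn (fun y => c x₁ y - c x₀ y) Y)
    (h₀ : cChord Y c x₀ x₁ u₀ u₁ x₀ = u₀) (h₁ : cChord Y c x₀ x₁ u₀ u₁ x₁ = u₁) :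
    ∃ y ∈ Y, ∃ h : ℝ, -c x₀ y + h = u₀ ∧ -c x₁ y + h = u₁ := by
  obtain ⟨ymax, hymax, hmax⟩ := hY.exists_isMaxOn hYne hc
  obtain ⟨ymin, hymin, hmin⟩ := hY.exists_isMinOn hYne hc
  have hle_max : u₀ - u₁ ≤ c x₁ ymax - c x₀ ymax := by
    linarith [h₀ ▸ cChord_left_le (u₀ := u₀) (u₁ := u₁) hYne fun y hy => hmax hy]
  have hmin_le : c x₁ ymin - c x₀ ymin ≤ u₀ - u₁ := by
    linarith [h₁ ▸ cChord_right_le (u₀ := u₀) (u₁ := u₁) hYne fun y hy => hmin hy]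
  obtain ⟨y, hy, hdy⟩ := hconn.intermediate_value hymin hymax hc ⟨hmin_le, hle_max⟩
  exact ⟨y, hy, u₀ + c x₀ y, by ring, by linarith⟩

end cChord

theorem stmt_8_general {n : ℕ} (X Y : Set (Ept n)) (c : Ept n → Ept n → ℝ)
    (hsetup : CostSetup X Y c)
    (x₀ : Ept n) (hx₀ : x₀ ∈ X) (x₁ : Ept n) (u₀ u₁ : ℝ)
    (h₀ : cChord Y c x₀ x₁ u₀ u₁ x₀ = u₀) (h₁ : cChord Y c x₀ x₁ u₀ u₁ x₁ = u₁) :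
    ∃ y ∈ Y, ∃ h : ℝ, -c x₀ y + h = u₀ ∧ -c x₁ y + h = u₁ := by
  have hc₁ : ContDiff ℝ 1 (uncurry c) := hsetup.smooth.of_le (by norm_num)
  have hconn : IsPreconnected Y :=
    hsetup.compactY.isPreconnected_of_injOn_of_convex_image
      (continuous_nDx hc₁ x₀).continuousOn (hsetup.twist x₀ hx₀) (hsetup.cConvY x₀ hx₀)
  have hcont : Continuous (uncurry c) := hc₁.continuous
  refine exists_cAffine_of_cChord_eq hsetup.compactY (hsetup.intY.mono interior_subset) hconn
    ?_ h₀ h₁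
  exact ((hcont.comp (Continuous.prodMk_right x₁)).sub
    (hcont.comp (Continuous.prodMk_right x₀))).continuousOn

/-- if the `c`-chord connects its endpoints, then some `c`-affine function
passes through both endpoints. -/
theorem stmt_8 {n : ℕ} (X Y : Set (Ept n)) (c : Ept n → Ept n → ℝ)
    (hsetup : CostSetup X Y c)
    (x₀ : Ept n) (hx₀ : x₀ ∈ X) (x₁ : Ept n) (hx₁ : x₁ ∈ X) (u₀ u₁ : ℝ)
    (h₀ : cChord Y c x₀ x₁ u₀ u₁ x₀ = u₀) (h₁ : cChord Y c x₀ x₁ u₀ u₁ x₁ = u₁) :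
    ∃ y ∈ Y, ∃ h : ℝ, -c x₀ y + h = u₀ ∧ -c x₁ y + h = u₁ :=
  stmt_8_general X Y c hsetup x₀ hx₀ x₁ u₀ u₁ h₀ h₁
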